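/- arXiv:2111.08843 — 3 statements merged into one kernel-verified Lean document; each statement's English description precedes it below -/
import Mathlib

section
/- Let I ⊆ [0, N−1] be nonempty and let w_min = min_{i∈I} w(g_i). The cosets C_i(I), i ∈ I, partition the code C(I) ∖ {0} into disjoint sets, and the number of minimum-weight codewords satisfies A_{w_min}(I) = Σ_{i ∈ I, w(g_i) = w_min} A_{i, w_min}(I); in particular, A_{i, w_min}(I) = 0 whenever w(g_i) > w_min. -/
noncomputable section
open scoped Classical
open Finset

/-- The 2×2 binary matrix [[1,0],[1,1]], as an ℕ-indexed function (zero outside range). -/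
def G2 (a b : ℕ) : ZMod 2 :=
  if a = 0 ∧ b = 0 then 1
  else if a = 1 ∧ b = 0 then 1
  else if a = 1 ∧ b = 1 then 1
  else 0

/-- `G n i c` is the (i,c) entry of the n-th Kronecker power over F₂ of [[1,0],[1,1]],
for row/column indices i, c ∈ [0, 2^n − 1] (standard row-major index flattening). -/
def G : ℕ → ℕ → ℕ → ZMod 2
  | 0 => fun i c => if i = 0 ∧ c = 0 then 1 else 0
  | n + 1 => fun i c => G2 (i / 2 ^ n) (c / 2 ^ n) * G n (i % 2 ^ n) (c % 2 ^ n)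

/-- Row i of the polar transform G_N (N = 2^n), as a vector of its coordinates. -/
def g (n i : ℕ) : ℕ → ZMod 2 := fun c => G n i c

/-- S_i ⊆ [0, n−1]: the support of the binary representation of i. -/
def S (n i : ℕ) : Finset ℕ := (Finset.range n).filter fun a => i.testBit a

/-- T_i = [0, n−1] \ S_i. -/
def T (n i : ℕ) : Finset ℕ := Finset.range n \ S n i

/-- Hamming weight of a vector whose coordinates are indexed by [0, 2^n − 1]. -/
def wt (n : ℕ) (v : ℕ → ZMod 2) : ℕ :=
  ((Finset.range (2 ^ n)).filter fun c => v c ≠ 0).card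

/-- The index in [0, 2^n − 1] whose binary support is the set U ⊆ [0, n−1]. -/
def idx (U : Finset ℕ) : ℕ := ∑ a ∈ U, 2 ^ a

/-- K_i = {j ∈ [i+1, N−1] : w(g_j) ≥ w(g_i ⊕ g_j) and w(g_i ⊕ g_j) = w(g_i)}. -/
def K (n i : ℕ) : Finset ℕ :=
  (Finset.Ico (i + 1) (2 ^ n)).filter fun j =>
    wt n (g n i + g n j) ≤ wt n (g n j) ∧ wt n (g n i + g n j) = wt n (g n i)

/-- One generating step of the partial order on [0, 2^n − 1]. -/
def poStep (n i j : ℕ) : Prop :=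
  i < 2 ^ n ∧ j < 2 ^ n ∧
    (S n i ⊆ S n j ∨
      ∃ a b, a ∈ S n i ∧ b ∉ S n i ∧ a < b ∧ S n j = insert b (S n i \ {a}))

/-- The partial order ⪯: reflexive–transitive closure of the generating relation. -/
def po (n : ℕ) : ℕ → ℕ → Prop := Relation.ReflTransGen (poStep n)

/-- Partial Order Property of an information set I ⊆ [0, 2^n − 1]. -/
def POP (n : ℕ) (I : Finset ℕ) : Prop :=
  ∀ i ∈ I, ∀ j, j < 2 ^ n → po n i j → j ∈ I

/-- The code C(I): all F₂-linear combinations (i.e. subset sums) of the rows g_i, i ∈ I. -/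
def codewords (n : ℕ) (I : Finset ℕ) : Finset (ℕ → ZMod 2) :=
  I.powerset.image fun H => ∑ h ∈ H, g n h

/-- A_w(I): the number of codewords of C(I) of Hamming weight w. -/
def A (n : ℕ) (I : Finset ℕ) (w : ℕ) : ℕ :=
  ((codewords n I).filter fun v => wt n v = w).card

/-- The coset C_i(I) = {g_i ⊕ ⊕_{h∈H} g_h : H ⊆ I \ [0,i]}. -/
def coset (n : ℕ) (I : Finset ℕ) (i : ℕ) : Finset (ℕ → ZMod 2) :=
  ((I.filter fun h => i < h).powerset).image fun H => g n i + ∑ h ∈ H, g n h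

/-- A_{i,w}(I): the number of vectors of Hamming weight w in the coset C_i(I). -/
def Ai (n : ℕ) (I : Finset ℕ) (i w : ℕ) : ℕ :=
  ((coset n I i).filter fun v => wt n v = w).card


/-
The rows of `G_N` are unitriangular: `g_i(i) = 1` and `g_i(c) = 0` for `c > i`. Hence distinct sets
of rows have distinct sums, and nonempty sets have nonzero sums; grouping the nonzero codewords by
the smallest row index in their expansion partitions `C(I) \ {0}` into the cosets `C_i(I)`.
The counting identity then reduces to `w(g_i ⊕ ⊕_{h ∈ H} g_h) ≥ w(g_i)` for `H ⊆ (i, N)`, proved by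
induction on `n` from the block form `G_{2N} = [[G_N, 0], [G_N, G_N]]`: a sum of rows of `G_{2N}`
is a Plotkin vector `(u ⊕ v | v)`, of weight `w(u ⊕ v) + w(v)`. If its smallest row `i` lies in the
lower half, this is at least `w(u) ≥ w(g_i)` by the triangle inequality and induction; otherwise
`u = 0` and it is `2 w(v) ≥ 2 w(g_{i-N}) = w(g_i)`.
-/

section Rows

variable {n i c : ℕ}

lemma g_succ_of_lt (hi : i < 2 ^ n) (hc : c < 2 ^ n) : g (n + 1) i c = g n i c := by
  simp [g, G, G2, Nat.div_eq_of_lt hi, Nat.div_eq_of_lt hc, Nat.mod_eq_of_lt hi,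
    Nat.mod_eq_of_lt hc]

lemma g_succ_two_pow_add_eq_zero (hi : i < 2 ^ n) (hc : c < 2 ^ n) :
    g (n + 1) i (2 ^ n + c) = 0 := by
  simp [g, G, G2, Nat.div_eq_of_lt hi, Nat.add_div_left, Nat.div_eq_of_lt hc]

lemma g_succ_two_pow_add (hi : i < 2 ^ n) (hc : c < 2 ^ n) :
    g (n + 1) (2 ^ n + i) c = g n i c := by
  simp [g, G, G2, Nat.add_div_left, Nat.div_eq_of_lt hi, Nat.div_eq_of_lt hc,
    Nat.mod_eq_of_lt hi, Nat.mod_eq_of_lt hc]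

lemma g_succ_two_pow_add_two_pow_add (hi : i < 2 ^ n) (hc : c < 2 ^ n) :
    g (n + 1) (2 ^ n + i) (2 ^ n + c) = g n i c := by
  simp [g, G, G2, Nat.add_div_left, Nat.div_eq_of_lt hi, Nat.div_eq_of_lt hc,
    Nat.mod_eq_of_lt hi, Nat.mod_eq_of_lt hc]

end Rows

lemma g_self : ∀ {n i : ℕ}, i < 2 ^ n → g n i i = 1
  | 0, 0, _ => rfl
  | n + 1, i, hi => by
    rcases lt_or_ge i (2 ^ n) with hlt | hge
    · rw [g_succ_of_lt hlt hlt, g_self hlt]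
    · obtain ⟨i, rfl⟩ := Nat.exists_eq_add_of_le hge
      have hi : i < 2 ^ n := by rw [pow_succ] at hi; omega
      rw [g_succ_two_pow_add_two_pow_add hi hi, g_self hi]

lemma g_eq_zero_of_lt : ∀ {n i c : ℕ}, i < c → c < 2 ^ n → g n i c = 0
  | 0, _, _, hic, hc => by simp at hc; omega
  | n + 1, i, c, hic, hc => by
    rcases lt_or_ge c (2 ^ n) with hlt | hge
    · rw [g_succ_of_lt (hic.trans hlt) hlt, g_eq_zero_of_lt hic hlt]
    obtain ⟨c, rfl⟩ := Nat.exists_eq_add_of_le hge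
    have hc : c < 2 ^ n := by rw [pow_succ] at hc; omega
    rcases lt_or_ge i (2 ^ n) with hi | hi
    · exact g_succ_two_pow_add_eq_zero hi hc
    obtain ⟨i, rfl⟩ := Nat.exists_eq_add_of_le hi
    rw [g_succ_two_pow_add_two_pow_add (by omega) hc, g_eq_zero_of_lt (by omega) hc]

section Weight

variable {n : ℕ}

lemma wt_congr {u v : ℕ → ZMod 2} (h : ∀ c < 2 ^ n, u c = v c) : wt n u = wt n v :=
  congrArg card <| filter_congr fun c hc => by rw [h c (mem_range.1 hc)]

@[simp]
lemma wt_zero : wt n 0 = 0 := by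
  simp [wt]

lemma wt_succ (v : ℕ → ZMod 2) : wt (n + 1) v = wt n v + wt n (fun c => v (2 ^ n + c)) := by
  simp only [wt, card_filter, pow_succ, mul_two, sum_range_add]

lemma wt_le_wt_add_add_wt (u v : ℕ → ZMod 2) : wt n u ≤ wt n (u + v) + wt n v := by
  unfold wt
  refine (card_le_card fun c hc => ?_).trans (card_union_le _ _)
  simp only [mem_filter, mem_union, Pi.add_apply] at hc ⊢
  by_cases hv : v c = 0
  · exact .inl ⟨hc.1, by rw [hv, add_zero]; exact hc.2⟩
  · exact .inr ⟨hc.1, hv⟩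

lemma wt_g_pos {i : ℕ} (hi : i < 2 ^ n) : 0 < wt n (g n i) :=
  card_pos.2 ⟨i, mem_filter.2 ⟨mem_range.2 hi, by simp [g_self hi]⟩⟩

end Weight

section RowSums

variable {n : ℕ}

lemma sum_g_ne_zero {D : Finset ℕ} (hD : D ⊆ range (2 ^ n)) (hne : D.Nonempty) :
    ∑ h ∈ D, g n h ≠ 0 := by
  intro h0
  have hm := D.max'_mem hne
  have hmax := congrFun h0 (D.max' hne)
  rw [Finset.sum_apply, sum_eq_single_of_mem _ hm fun h hh hne' =>
    g_eq_zero_of_lt ((D.le_max' h hh).lt_of_ne hne') (mem_range.1 (hD hm)),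
    g_self (mem_range.1 (hD hm))] at hmax
  exact one_ne_zero hmax

lemma sum_g_inj {B C : Finset ℕ} (hB : B ⊆ range (2 ^ n)) (hC : C ⊆ range (2 ^ n))
    (h : ∑ h ∈ B, g n h = ∑ h ∈ C, g n h) : B = C := by
  by_contra hne
  refine sum_g_ne_zero (symmDiff_subset_union.trans (union_subset hB hC))
    (symmDiff_nonempty.2 hne) ?_
  have hsub : ∑ h ∈ B \ C, g n h - ∑ h ∈ C \ B, g n h = 0 := by
    rw [sum_sdiff_sub_sum_sdiff, h, sub_self]
  rw [Finset.symmDiff_def, sum_union disjoint_sdiff_sdiff, ← hsub]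
  funext c
  simp [ZMod.neg_eq_self_mod_two, sub_eq_add_neg]

lemma sum_eq_sum_filter_lt_add_sum_two_pow_add {M : Type*} [AddCommMonoid M] (f : ℕ → M)
    {D : Finset ℕ} (hD : D ⊆ range (2 ^ (n + 1))) :
    ∑ h ∈ D, f h = ∑ h ∈ D.filter (· < 2 ^ n), f h +
      ∑ h ∈ (range (2 ^ n)).filter (2 ^ n + · ∈ D), f (2 ^ n + h) := by
  rw [← sum_filter_add_sum_filter_not D (· < 2 ^ n)]
  congr 1
  refine sum_nbij' (· - 2 ^ n) (2 ^ n + ·) ?_ ?_ ?_ ?_ ?_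
  · intro h hh
    have := mem_range.1 (hD (mem_filter.1 hh).1)
    simp only [mem_filter, mem_range, pow_succ] at hh this ⊢
    refine ⟨by omega, ?_⟩
    rw [Nat.add_sub_cancel' (by omega)]
    exact hh.1
  · intro h hh
    simp only [mem_filter, mem_range] at hh ⊢
    exact ⟨hh.2, by omega⟩
  · intro h hh
    simp only [mem_filter] at hh
    omega
  · intro h _
    omega
  · intro h hh
    simp only [mem_filter] at hh
    rw [Nat.add_sub_cancel' (by omega)]

-- The sum of rows is Plotkin's `(u ⊕ v | v)` with `u`, `v` the row sums over `D₀`, `D₁` in `G_N`.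
lemma wt_succ_sum_g_add_sum_g_two_pow_add {D₀ D₁ : Finset ℕ} (h₀ : D₀ ⊆ range (2 ^ n))
    (h₁ : D₁ ⊆ range (2 ^ n)) :
    wt (n + 1) (∑ h ∈ D₀, g (n + 1) h + ∑ h ∈ D₁, g (n + 1) (2 ^ n + h)) =
      wt n (∑ h ∈ D₀, g n h + ∑ h ∈ D₁, g n h) + wt n (∑ h ∈ D₁, g n h) := by
  rw [wt_succ]
  congr 1 <;> refine wt_congr fun c hc => ?_ <;>
    simp only [Pi.add_apply, Finset.sum_apply]
  · rw [sum_congr rfl fun h hh => g_succ_of_lt (mem_range.1 (h₀ hh)) hc,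
      sum_congr rfl fun h hh => g_succ_two_pow_add (mem_range.1 (h₁ hh)) hc]
  · rw [sum_congr rfl fun h hh => g_succ_two_pow_add_eq_zero (mem_range.1 (h₀ hh)) hc,
      sum_congr rfl fun h hh => g_succ_two_pow_add_two_pow_add (mem_range.1 (h₁ hh)) hc,
      sum_const_zero, zero_add]

theorem wt_g_le_wt_sum_g : ∀ {n : ℕ} {D : Finset ℕ}, D ⊆ range (2 ^ n) → ∀ {i : ℕ}, i ∈ D →
    (∀ h ∈ D, i ≤ h) → wt n (g n i) ≤ wt n (∑ h ∈ D, g n h)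
  | 0, D, hD, i, hi, _ => by
    obtain rfl : D = {i} := eq_singleton_iff_unique_mem.2
      ⟨hi, fun h hh => by
        have h1 := mem_range.1 (hD hh)
        have h2 := mem_range.1 (hD hi)
        rw [pow_zero] at h1 h2
        omega⟩
    rw [sum_singleton]
  | n + 1, D, hD, i, hi, hmin => by
    set D₀ := D.filter (· < 2 ^ n)
    set D₁ := (range (2 ^ n)).filter (2 ^ n + · ∈ D)
    have h₀ : D₀ ⊆ range (2 ^ n) := fun h hh => mem_range.2 (mem_filter.1 hh).2
    have h₁ : D₁ ⊆ range (2 ^ n) := filter_subset _ _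
    rw [sum_eq_sum_filter_lt_add_sum_two_pow_add _ hD, wt_succ_sum_g_add_sum_g_two_pow_add h₀ h₁]
    rcases lt_or_ge i (2 ^ n) with hlt | hge
    · have hrow := wt_succ_sum_g_add_sum_g_two_pow_add (n := n) (D₀ := {i}) (D₁ := ∅)
        (singleton_subset_iff.2 (mem_range.2 hlt)) (empty_subset _)
      simp only [sum_singleton, sum_empty, add_zero, wt_zero] at hrow
      calc wt (n + 1) (g (n + 1) i) = wt n (g n i) := hrow
        _ ≤ wt n (∑ h ∈ D₀, g n h) :=
          wt_g_le_wt_sum_g h₀ (mem_filter.2 ⟨hi, hlt⟩) fun h hh => hmin h (mem_filter.1 hh).1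
        _ ≤ _ := wt_le_wt_add_add_wt _ _
    · obtain ⟨i, rfl⟩ := Nat.exists_eq_add_of_le hge
      have hi' : i ∈ D₁ := mem_filter.2 ⟨mem_range.2 (by
        have := mem_range.1 (hD hi); rw [pow_succ] at this; omega), hi⟩
      have hD₀ : D₀ = ∅ := filter_eq_empty_iff.2 fun h hh => by have := hmin h hh; omega
      have hrow := wt_succ_sum_g_add_sum_g_two_pow_add (n := n) (D₀ := ∅) (D₁ := {i})
        (empty_subset _) (singleton_subset_iff.2 (h₁ hi'))
      simp only [sum_singleton, sum_empty, zero_add] at hrow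
      have hle := wt_g_le_wt_sum_g h₁ hi' fun h hh => by
        have := hmin _ (mem_filter.1 hh).2; omega
      rw [hrow, hD₀, sum_empty, zero_add]
      omega

end RowSums

section Cosets

variable {n : ℕ} {I : Finset ℕ} {i : ℕ}

lemma mem_coset {v : ℕ → ZMod 2} :
    v ∈ coset n I i ↔ ∃ H ⊆ I.filter (i < ·), v = ∑ h ∈ insert i H, g n h := by
  simp only [coset, mem_image, mem_powerset]
  refine exists_congr fun H => and_congr_right fun hH => ?_
  have hiH : i ∉ H := fun hi => (mem_filter.1 (hH hi)).2.false
  rw [sum_insert hiH, eq_comm]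

lemma coset_disjoint (hI : I ⊆ range (2 ^ n)) {j : ℕ} (hi : i ∈ I) (hj : j ∈ I) (hij : i ≠ j) :
    Disjoint (coset n I i) (coset n I j) := by
  refine disjoint_left.2 fun v hvi hvj => ?_
  obtain ⟨H, hH, rfl⟩ := mem_coset.1 hvi
  obtain ⟨H', hH', hv⟩ := mem_coset.1 hvj
  have hsets := sum_g_inj ((insert_subset hi (hH.trans (filter_subset _ _))).trans hI)
    ((insert_subset hj (hH'.trans (filter_subset _ _))).trans hI) hv
  have hjH : j ∈ H := (mem_insert.1 (hsets ▸ mem_insert_self j H')).resolve_left hij.symm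
  have hiH' : i ∈ H' := (mem_insert.1 (hsets.symm ▸ mem_insert_self i H)).resolve_left hij
  exact (mem_filter.1 (hH hjH)).2.asymm (mem_filter.1 (hH' hiH')).2

lemma biUnion_coset (hI : I ⊆ range (2 ^ n)) :
    I.biUnion (coset n I) = (codewords n I).erase 0 := by
  ext v
  simp only [mem_biUnion, mem_erase, codewords, mem_image, mem_powerset, mem_coset]
  constructor
  · rintro ⟨i, hi, H, hH, rfl⟩
    have hiH : insert i H ⊆ I := insert_subset hi (hH.trans (filter_subset _ _))
    exact ⟨sum_g_ne_zero (hiH.trans hI) (insert_nonempty i H), _, hiH, rfl⟩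
  · rintro ⟨hv, D, hD, rfl⟩
    have hne : D.Nonempty := nonempty_of_ne_empty fun h => hv (by simp [h])
    refine ⟨D.min' hne, hD (D.min'_mem hne), D.erase (D.min' hne), fun h hh => ?_, ?_⟩
    · obtain ⟨hne', hh⟩ := mem_erase.1 hh
      exact mem_filter.2 ⟨hD hh, (D.min'_le h hh).lt_of_ne' hne'⟩
    · rw [insert_erase (D.min'_mem hne)]

lemma wt_g_le_of_mem_coset (hI : I ⊆ range (2 ^ n)) (hi : i ∈ I) {v : ℕ → ZMod 2}
    (hv : v ∈ coset n I i) : wt n (g n i) ≤ wt n v := by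
  obtain ⟨H, hH, rfl⟩ := mem_coset.1 hv
  refine wt_g_le_wt_sum_g ((insert_subset hi (hH.trans (filter_subset _ _))).trans hI)
    (mem_insert_self i H) fun h hh => ?_
  rcases mem_insert.1 hh with rfl | hh
  exacts [le_rfl, (mem_filter.1 (hH hh)).2.le]

lemma Ai_eq_zero_of_lt_wt (hI : I ⊆ range (2 ^ n)) (hi : i ∈ I) {w : ℕ}
    (hw : w < wt n (g n i)) : Ai n I i w = 0 :=
  card_eq_zero.2 <| filter_eq_empty_iff.2 fun _ hv hvw =>
    (wt_g_le_of_mem_coset hI hi hv).not_gt (hvw ▸ hw)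

lemma A_eq_sum_Ai (hI : I ⊆ range (2 ^ n)) {w : ℕ} (hw : 0 < w) :
    A n I w = ∑ i ∈ I, Ai n I i w := by
  have hnonzero : (codewords n I).filter (wt n · = w) =
      ((codewords n I).erase 0).filter (wt n · = w) := by
    rw [filter_erase, erase_eq_of_notMem]
    simp only [mem_filter, wt_zero]
    omega
  rw [A, hnonzero, ← biUnion_coset hI, filter_biUnion, card_biUnion]
  · rfl
  · exact fun i hi j hj hij =>
      (coset_disjoint hI hi hj hij).mono (filter_subset _ _) (filter_subset _ _)

end Cosets

theorem coset_partition_general (n : ℕ) (I : Finset ℕ) (hI : I.Nonempty)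
    (hIr : ∀ i ∈ I, i < 2 ^ n)
    (wmin : ℕ) (hw : wmin = I.inf' hI fun i => wt n (g n i)) :
    (∀ i ∈ I, ∀ j ∈ I, i ≠ j → Disjoint (coset n I i) (coset n I j)) ∧
    I.biUnion (coset n I) = (codewords n I).erase 0 ∧
    A n I wmin = ∑ i ∈ I.filter fun i => wt n (g n i) = wmin, Ai n I i wmin ∧
    ∀ i ∈ I, wmin < wt n (g n i) → Ai n I i wmin = 0 := by
  have hIrange : I ⊆ range (2 ^ n) := fun i hi => mem_range.2 (hIr i hi)
  have hle : ∀ i ∈ I, wmin ≤ wt n (g n i) := fun i hi => hw ▸ inf'_le _ hi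
  have hpos : 0 < wmin := by
    obtain ⟨i, hi, hwi⟩ := exists_mem_eq_inf' hI fun i => wt n (g n i)
    exact hw ▸ hwi ▸ wt_g_pos (hIr i hi)
  have hzero : ∀ i ∈ I, wmin < wt n (g n i) → Ai n I i wmin = 0 :=
    fun i hi => Ai_eq_zero_of_lt_wt hIrange hi
  refine ⟨fun i hi j hj => coset_disjoint hIrange hi hj, biUnion_coset hIrange, ?_, hzero⟩
  rw [A_eq_sum_Ai hIrange hpos, sum_filter_of_ne fun i hi hAi => ?_]
  by_contra hne
  exact hAi (hzero i hi ((hle i hi).lt_of_ne' hne))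

/-- the cosets C_i(I), i ∈ I, partition C(I) \ {0}, and
A_{w_min}(I) = Σ_{i ∈ I, w(g_i)=w_min} A_{i,w_min}(I); in particular A_{i,w_min}(I) = 0
whenever w(g_i) > w_min. -/
theorem coset_partition (n : ℕ) (hn : 1 ≤ n) (I : Finset ℕ) (hI : I.Nonempty)
    (hIr : ∀ i ∈ I, i < 2 ^ n)
    (wmin : ℕ) (hw : wmin = I.inf' hI fun i => wt n (g n i)) :
    (∀ i ∈ I, ∀ j ∈ I, i ≠ j → Disjoint (coset n I i) (coset n I j)) ∧
    I.biUnion (coset n I) = (codewords n I).erase 0 ∧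
    A n I wmin = ∑ i ∈ I.filter fun i => wt n (g n i) = wmin, Ai n I i wmin ∧
    ∀ i ∈ I, wmin < wt n (g n i) → Ai n I i wmin = 0 :=
  coset_partition_general n I hI hIr wmin hw
end
end

section
/- For every i ∈ [0, N−1], the set K_i equals {j ∈ [i+1, N−1] : |S_j \ S_i| = 1 and |S_j| ∈ {|S_i|, |S_i|+1}}. -/
/-!
Since `G n i c = 1` exactly when `S_c ⊆ S_i`, and `c ↦ S_c` is a bijection from `[0, 2^n)` onto
the subsets of `[0, n)`, the row `g_i` is the indicator of the subsets of `S_i`. Hence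
`w(g_i) = 2^|S_i|`, and `g_i ⊕ g_j` is the indicator of the symmetric difference of the two
powersets, of weight `(2^|S_i| - 2^m) + (2^|S_j| - 2^m)` with `m = |S_i ∩ S_j|`. The two weight
conditions defining `K_i` then say `|S_j| = m + 1` and `|S_i| ≤ m + 1`.
-/

noncomputable section
open scoped Classical
open Finset

lemma S_subset_range (n i : ℕ) : S n i ⊆ range n := filter_subset _ _

lemma S_subset_S_iff {n c i : ℕ} : S n c ⊆ S n i ↔ ∀ a < n, c.testBit a → i.testBit a := by
  simp only [S, subset_iff, mem_filter, mem_range]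
  exact ⟨fun h a ha hc => (h ⟨ha, hc⟩).2, fun h a ⟨ha, hc⟩ => ⟨ha, h a ha hc⟩⟩

lemma S_mod_two_pow (n i : ℕ) : S n (i % 2 ^ n) = S n i := by
  ext a
  simp +contextual [S, Nat.testBit_mod_two_pow]

lemma S_succ_subset_S_succ_iff {n c i : ℕ} :
    S (n + 1) c ⊆ S (n + 1) i ↔ S n c ⊆ S n i ∧ (c.testBit n → i.testBit n) := by
  simp only [S_subset_S_iff, Nat.forall_lt_succ_right]

lemma div_two_pow_lt_two {n x : ℕ} (hx : x < 2 ^ (n + 1)) : x / 2 ^ n < 2 :=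
  Nat.div_lt_of_lt_mul (by rwa [← pow_succ])

lemma testBit_iff_div_two_pow_eq_one {n x : ℕ} (hx : x < 2 ^ (n + 1)) :
    x.testBit n ↔ x / 2 ^ n = 1 := by
  have := div_two_pow_lt_two hx
  rw [Nat.testBit_eq_decide_div_mod_eq]
  interval_cases x / 2 ^ n <;> simp

lemma G2_of_lt_two {x y : ℕ} (hx : x < 2) (hy : y < 2) :
    G2 x y = if y = 1 → x = 1 then 1 else 0 := by
  interval_cases x <;> interval_cases y <;> simp [G2]

lemma G_eq_ite {n i c : ℕ} (hi : i < 2 ^ n) (hc : c < 2 ^ n) :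
    G n i c = if S n c ⊆ S n i then 1 else 0 := by
  induction n generalizing i c with
  | zero =>
    obtain rfl : i = 0 := by simpa using hi
    obtain rfl : c = 0 := by simpa using hc
    simp [G, S]
  | succ n ih =>
    have hmod (x : ℕ) : x % 2 ^ n < 2 ^ n := Nat.mod_lt _ (Nat.two_pow_pos n)
    simp only [G]
    rw [G2_of_lt_two (div_two_pow_lt_two hi) (div_two_pow_lt_two hc), ih (hmod i) (hmod c),
      ite_zero_mul_ite_zero, S_mod_two_pow, S_mod_two_pow, one_mul]
    simp only [S_succ_subset_S_succ_iff, testBit_iff_div_two_pow_eq_one hi,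
      testBit_iff_div_two_pow_eq_one hc, and_comm]

lemma S_injOn (n : ℕ) : Set.InjOn (S n) (range (2 ^ n)) := by
  intro x hx y hy hxy
  simp only [coe_range, Set.mem_Iio] at hx hy
  refine Nat.eq_of_testBit_eq fun a => ?_
  by_cases ha : a < n
  · rw [Bool.eq_iff_iff]
    exact ⟨S_subset_S_iff.1 hxy.le a ha, S_subset_S_iff.1 hxy.ge a ha⟩
  · have hle : 2 ^ n ≤ 2 ^ a := Nat.pow_le_pow_right two_pos (not_lt.1 ha)
    rw [Nat.testBit_lt_two_pow (hx.trans_le hle), Nat.testBit_lt_two_pow (hy.trans_le hle)]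

lemma image_S_range (n : ℕ) : (range (2 ^ n)).image (S n) = (range n).powerset := by
  refine eq_of_subset_of_card_le (fun U hU => ?_) ?_
  · obtain ⟨c, -, rfl⟩ := mem_image.1 hU
    exact mem_powerset.2 (S_subset_range n c)
  · rw [card_powerset, card_image_of_injOn (S_injOn n), card_range, card_range]

lemma wt_eq_card {n : ℕ} {v : ℕ → ZMod 2} {𝒜 : Finset (Finset ℕ)}
    (h𝒜 : 𝒜 ⊆ (range n).powerset) (hv : ∀ c < 2 ^ n, v c ≠ 0 ↔ S n c ∈ 𝒜) :
    wt n v = #𝒜 := by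
  calc wt n v = #((range (2 ^ n)).filter fun c => S n c ∈ 𝒜) :=
        congrArg card (filter_congr fun c hc => hv c (mem_range.1 hc))
    _ = #(((range (2 ^ n)).filter fun c => S n c ∈ 𝒜).image (S n)) :=
        (card_image_of_injOn ((S_injOn n).mono (filter_subset _ _))).symm
    _ = #((range n).powerset.filter (· ∈ 𝒜)) := by rw [← image_S_range, filter_image]
    _ = #𝒜 := by rw [filter_mem_eq_inter, inter_eq_right.2 h𝒜]

lemma card_powerset_sdiff_powerset {α : Type*} [DecidableEq α] (A B : Finset α) :
    #(A.powerset \ B.powerset) = 2 ^ #A - 2 ^ #(A ∩ B) := by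
  have hinter : B.powerset ∩ A.powerset = (A ∩ B).powerset := by
    ext U
    simp only [mem_inter, mem_powerset, subset_inter_iff, and_comm]
  rw [card_sdiff, hinter, card_powerset, card_powerset]

lemma wt_g {n i : ℕ} (hi : i < 2 ^ n) : wt n (g n i) = 2 ^ #(S n i) := by
  rw [wt_eq_card (𝒜 := (S n i).powerset) (powerset_mono.2 (S_subset_range n i)), card_powerset]
  intro c hc
  rw [g, G_eq_ite hi hc, mem_powerset]
  split_ifs with h <;> simp [h]

lemma wt_g_add_g {n i j : ℕ} (hi : i < 2 ^ n) (hj : j < 2 ^ n) :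
    wt n (g n i + g n j) =
      (2 ^ #(S n i) - 2 ^ #(S n i ∩ S n j)) + (2 ^ #(S n j) - 2 ^ #(S n i ∩ S n j)) := by
  have hsub (k : ℕ) : (S n k).powerset ⊆ (range n).powerset :=
    powerset_mono.2 (S_subset_range n k)
  rw [wt_eq_card (𝒜 := (S n i).powerset \ (S n j).powerset ∪ (S n j).powerset \ (S n i).powerset)
      (union_subset (sdiff_subset.trans (hsub i)) (sdiff_subset.trans (hsub j))),
    card_union_of_disjoint disjoint_sdiff_sdiff, card_powerset_sdiff_powerset,
    card_powerset_sdiff_powerset, inter_comm (S n j)]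
  intro c hc
  simp only [Pi.add_apply, g, G_eq_ite hi hc, G_eq_ite hj hc, mem_union, mem_sdiff, mem_powerset]
  split_ifs <;> simp_all [show (1 + 1 : ZMod 2) = 0 from rfl]

lemma two_pow_sub_two_pow_le_two_pow_iff {a m : ℕ} (hm : m ≤ a) :
    2 ^ a - 2 ^ m ≤ 2 ^ m ↔ a ≤ m + 1 := by
  have := Nat.pow_le_pow_right two_pos hm
  rw [← Nat.pow_le_pow_iff_right (n := a) one_lt_two, pow_succ]
  omega

lemma two_pow_sub_two_pow_eq_two_pow_iff {b m : ℕ} (hm : m ≤ b) :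
    2 ^ b - 2 ^ m = 2 ^ m ↔ b = m + 1 := by
  have := Nat.pow_le_pow_right two_pos hm
  rw [← (Nat.pow_right_injective le_rfl).eq_iff (a := b), pow_succ]
  omega

lemma weight_conditions_iff {a b m : ℕ} (ha : m ≤ a) (hb : m ≤ b) :
    ((2 ^ a - 2 ^ m) + (2 ^ b - 2 ^ m) ≤ 2 ^ b ∧ (2 ^ a - 2 ^ m) + (2 ^ b - 2 ^ m) = 2 ^ a) ↔
      (b - m = 1 ∧ (b = a ∨ b = a + 1)) := by
  have hle := two_pow_sub_two_pow_le_two_pow_iff ha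
  have heq := two_pow_sub_two_pow_eq_two_pow_iff hb
  have := Nat.pow_le_pow_right two_pos ha
  have := Nat.pow_le_pow_right two_pos hb
  omega

theorem K_characterization_general (n : ℕ) (i : ℕ) (hi : i < 2 ^ n) :
    K n i = (Finset.Ico (i + 1) (2 ^ n)).filter fun j =>
      (S n j \ S n i).card = 1 ∧
        ((S n j).card = (S n i).card ∨ (S n j).card = (S n i).card + 1) := by
  refine filter_congr fun j hj => ?_
  have hj : j < 2 ^ n := (mem_Ico.1 hj).2
  rw [wt_g_add_g hi hj, wt_g hi, wt_g hj, card_sdiff,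
    weight_conditions_iff (card_le_card inter_subset_left) (card_le_card inter_subset_right)]

/-- K_i = {j ∈ [i+1,N−1] : |S_j \ S_i| = 1 and |S_j| ∈ {|S_i|, |S_i|+1}}. -/
theorem K_characterization (n : ℕ) (hn : 1 ≤ n) (i : ℕ) (hi : i < 2 ^ n) :
    K n i = (Finset.Ico (i + 1) (2 ^ n)).filter fun j =>
      (S n j \ S n i).card = 1 ∧
        ((S n j).card = (S n i).card ∨ (S n j).card = (S n i).card + 1) :=
  K_characterization_general n i hi
end
end

section
/- Let i, m ∈ [0, N−1] and suppose there exists an injective map f from S_i \ S_m into S_m \ S_i such that a < f(a) for every a ∈ S_i \ S_m (equivalently, S_i \ S_m = {a_1, …, a_ℓ}, S_m \ S_i = {b_1, …, b_u} with ℓ ≤ u and a_t < b_t for all t ∈ [1, ℓ]). Then i ⪯ m. -/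
noncomputable section
open scoped Classical
open Finset

/-! Moving the elements of `S_i \ S_m` one at a time to their images under `f` is a chain of
generating steps of `⪯`; injectivity of `f` guarantees that after moving `a` to `f a` the
remaining elements still map into the new `S_m \ S_j`. -/

lemma Finset.forall_mem_erase_of_injOn {α β : Type*} [DecidableEq α] [DecidableEq β]
    {f : α → β} {s : Finset α} {t : Finset β} {a : α} (ha : a ∉ s)
    (hmaps : ∀ x ∈ insert a s, f x ∈ t)
    (hinj : Set.InjOn f (insert a s : Finset α)) :
    ∀ x ∈ s, f x ∈ t.erase (f a) := by
  intro x hx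
  refine mem_erase.mpr ⟨fun hfx => ?_, hmaps x (mem_insert_of_mem hx)⟩
  have hxa : x = a := hinj (by simp [hx]) (by simp) hfx
  exact ha (hxa ▸ hx)

lemma testBit_idx (U : Finset ℕ) (t : ℕ) : (idx U).testBit t ↔ t ∈ U := by
  rw [← Nat.mem_bitIndices, ← List.mem_toFinset, idx, Finset.toFinset_bitIndices_sum_two_pow]

lemma idx_lt {n : ℕ} {U : Finset ℕ} (hU : U ⊆ range n) : idx U < 2 ^ n :=
  Nat.geomSum_lt le_rfl fun _ hk => mem_range.mp (hU hk)

lemma S_idx {n : ℕ} {U : Finset ℕ} (hU : U ⊆ range n) : S n (idx U) = U := by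
  ext t
  simp only [S, mem_filter, testBit_idx, and_iff_right_iff_imp]
  exact fun h => hU h

lemma exists_poStep_move {n i m a b : ℕ} (hi : i < 2 ^ n)
    (ha : a ∈ S n i \ S n m) (hb : b ∈ S n m \ S n i) (hab : a < b) :
    ∃ j, poStep n i j ∧ S n j \ S n m = (S n i \ S n m).erase a ∧
      S n m \ S n j = (S n m \ S n i).erase b := by
  obtain ⟨haSi, haSm⟩ := mem_sdiff.mp ha
  obtain ⟨hbSm, hbSi⟩ := mem_sdiff.mp hb
  have hU : insert b (S n i \ {a}) ⊆ range n :=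
    insert_subset (filter_subset _ _ hbSm) (sdiff_subset.trans (filter_subset _ _))
  have hSj := S_idx hU
  refine ⟨idx _, ⟨hi, idx_lt hU, Or.inr ⟨a, b, haSi, hbSi, hab, hSj⟩⟩, ?_, ?_⟩ <;>
    ext x <;> simp only [hSj, mem_sdiff, mem_insert, mem_erase, mem_singleton] <;> grind

theorem po_of_injOn_sdiff {n m : ℕ} (hm : m < 2 ^ n) {f : ℕ → ℕ} (s : Finset ℕ) :
    ∀ i < 2 ^ n, S n i \ S n m = s → (∀ a ∈ s, f a ∈ S n m \ S n i) →
      Set.InjOn f (s : Set ℕ) → (∀ a ∈ s, a < f a) → po n i m := by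
  induction s using Finset.induction_on with
  | empty =>
    intro i hi hs _ _ _
    exact .single ⟨hi, hm, Or.inl (sdiff_eq_empty_iff_subset.mp hs)⟩
  | insert a s ha ih =>
    intro i hi hs hmaps hinj hlt
    have haD : a ∈ S n i \ S n m := hs ▸ mem_insert_self a s
    obtain ⟨j, hij, hSj, hSm⟩ :=
      exists_poStep_move hi haD (hmaps a (mem_insert_self a s)) (hlt a (mem_insert_self a s))
    refine .head hij (ih j hij.2.1 ?_ ?_ (hinj.mono (by simp)) fun x hx => hlt x (by simp [hx]))
    · rw [hSj, hs, erase_insert ha]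
    · exact hSm ▸ forall_mem_erase_of_injOn ha hmaps hinj

theorem extPO_general (n : ℕ) (i m : ℕ) (hi : i < 2 ^ n) (hm : m < 2 ^ n)
    (f : ℕ → ℕ)
    (hmaps : ∀ a ∈ S n i \ S n m, f a ∈ S n m \ S n i)
    (hinj : Set.InjOn f ((S n i \ S n m : Finset ℕ) : Set ℕ))
    (hlt : ∀ a ∈ S n i \ S n m, a < f a) :
    po n i m :=
  po_of_injOn_sdiff hm _ i hi rfl hmaps hinj hlt

/-- if there is an injection f : S_i \ S_m → S_m \ S_i with a < f(a) for
all a ∈ S_i \ S_m, then i ⪯ m. -/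
theorem extPO (n : ℕ) (hn : 1 ≤ n) (i m : ℕ) (hi : i < 2 ^ n) (hm : m < 2 ^ n)
    (f : ℕ → ℕ)
    (hmaps : ∀ a ∈ S n i \ S n m, f a ∈ S n m \ S n i)
    (hinj : Set.InjOn f ((S n i \ S n m : Finset ℕ) : Set ℕ))
    (hlt : ∀ a ∈ S n i \ S n m, a < f a) :
    po n i m :=
  extPO_general n i m hi hm f hmaps hinj hlt
end
end
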